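/- Soundness of the forcing calculus: for polarized types, if V ; C ; · ; Δ ⊢^q P :: (x : A) is derivable in the forcing calculus, then V ; C ; Δ ⊩^q P :: (x : A) is derivable in the implicit type system. -/

import Mathlib

/-! Arithmetic expressions and Presburger propositions over natural numbers,
with de Bruijn index variables. -/

inductive AExp : Type
  | const : ℕ → AExp
  | var : ℕ → AExp
  | add : AExp → AExp → AExp
  | sub : AExp → AExp → AExp
  | mul : ℕ → AExp → AExp

namespace AExp

def eval (σ : ℕ → ℕ) : AExp → ℕ
  | const n => n
  | var n => σ n
  | add a b => a.eval σ + b.eval σ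
  | sub a b => a.eval σ - b.eval σ
  | mul k a => k * a.eval σ

def subst (τ : ℕ → AExp) : AExp → AExp
  | const n => const n
  | var n => τ n
  | add a b => add (a.subst τ) (b.subst τ)
  | sub a b => sub (a.subst τ) (b.subst τ)
  | mul k a => mul k (a.subst τ)

/-- Shifting: adding a fresh index variable `0`. -/
def shift (e : AExp) : AExp := e.subst (fun n => var (n + 1))

end AExp

/-- Cons for substitutions/assignments. -/
def scons {α : Type*} (i : α) (σ : ℕ → α) : ℕ → α
  | 0 => i
  | n + 1 => σ n

/-- Lifting a substitution under a binder. -/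
def liftτ (τ : ℕ → AExp) : ℕ → AExp :=
  scons (AExp.var 0) (fun n => (τ n).shift)

inductive AProp : Type
  | aeq : AExp → AExp → AProp
  | agt : AExp → AExp → AProp
  | tt : AProp
  | ff : AProp
  | conj : AProp → AProp → AProp
  | disj : AProp → AProp → AProp
  | neg : AProp → AProp
  | aexists : AProp → AProp
  | aforall : AProp → AProp

namespace AProp

def holds (σ : ℕ → ℕ) : AProp → Prop
  | aeq a b => a.eval σ = b.eval σ
  | agt a b => b.eval σ < a.eval σ
  | tt => True
  | ff => False
  | conj φ ψ => φ.holds σ ∧ ψ.holds σ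
  | disj φ ψ => φ.holds σ ∨ ψ.holds σ
  | neg φ => ¬ φ.holds σ
  | aexists φ => ∃ i : ℕ, φ.holds (scons i σ)
  | aforall φ => ∀ i : ℕ, φ.holds (scons i σ)

def subst (τ : ℕ → AExp) : AProp → AProp
  | aeq a b => aeq (a.subst τ) (b.subst τ)
  | agt a b => agt (a.subst τ) (b.subst τ)
  | tt => tt
  | ff => ff
  | conj φ ψ => conj (φ.subst τ) (ψ.subst τ)
  | disj φ ψ => disj (φ.subst τ) (ψ.subst τ)
  | neg φ => neg (φ.subst τ)
  | aexists φ => aexists (φ.subst (liftτ τ))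
  | aforall φ => aforall (φ.subst (liftτ τ))

/-- Shifting: adding a fresh index variable `0`. -/
def shift (φ : AProp) : AProp := φ.subst (fun n => .var (n + 1))

end AProp

/-! Semantic entailments in the constraint domain. -/

/-- `V ; C ⊨ φ`. -/
def Entails (C φ : AProp) : Prop := ∀ σ : ℕ → ℕ, C.holds σ → φ.holds σ

/-- `V ; C ⊨ q = r` for arithmetic expressions. -/
def EntailsEq (C : AProp) (q r : AExp) : Prop :=
  ∀ σ : ℕ → ℕ, C.holds σ → q.eval σ = r.eval σ

/-- `V ; C ⊨ q ≥ r` for arithmetic expressions. -/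
def EntailsGe (C : AProp) (q r : AExp) : Prop :=
  ∀ σ : ℕ → ℕ, C.holds σ → r.eval σ ≤ q.eval σ

/-- `V ; C ⊨ ⊥`. -/
def Unsat (C : AProp) : Prop := ∀ σ : ℕ → ℕ, ¬ C.holds σ

/-! Session types.  Labeled choices are functions from a finite set of labels;
quantifiers bind a de Bruijn index variable. -/

inductive STy : Type
  | ichoice : Finset ℕ → (ℕ → STy) → STy        -- ⊕{ℓ : A_ℓ}
  | echoice : Finset ℕ → (ℕ → STy) → STy        -- &{ℓ : A_ℓ}
  | tensor : STy → STy → STy                    -- A ⊗ B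
  | lolli : STy → STy → STy                     -- A ⊸ B
  | one : STy                                   -- 1
  | tname : ℕ → List AExp → STy                 -- V[ē]
  | sassert : AProp → STy → STy                 -- ?{φ}. A
  | sassume : AProp → STy → STy                 -- !{φ}. A
  | sexists : STy → STy                         -- ?n. A
  | sforall : STy → STy                         -- !n. A
  | tpay : AExp → STy → STy                     -- ▷^r A
  | tget : AExp → STy → STy                     -- ◁^r A

namespace STy

def subst (τ : ℕ → AExp) : STy → STy
  | ichoice L f => ichoice L (fun ℓ => (f ℓ).subst τ)
  | echoice L f => echoice L (fun ℓ => (f ℓ).subst τ)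
  | tensor A B => tensor (A.subst τ) (B.subst τ)
  | lolli A B => lolli (A.subst τ) (B.subst τ)
  | one => one
  | tname v es => tname v (es.map (AExp.subst τ))
  | sassert φ A => sassert (φ.subst τ) (A.subst τ)
  | sassume φ A => sassume (φ.subst τ) (A.subst τ)
  | sexists A => sexists (A.subst (liftτ τ))
  | sforall A => sforall (A.subst (liftτ τ))
  | tpay r A => tpay (r.subst τ) (A.subst τ)
  | tget r A => tget (r.subst τ) (A.subst τ)

/-- Substituting an arithmetic expression for the index variable bound by a
quantifier. -/
def subst0 (e : AExp) (A : STy) : STy := A.subst (scons e AExp.var)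

/-- Shifting: adding a fresh index variable `0`. -/
def shift (A : STy) : STy := A.subst (fun n => .var (n + 1))

/-- Instantiating the parameters of a type definition with a list of index
expressions. -/
def instIdx (es : List AExp) (A : STy) : STy :=
  A.subst (fun n => es.getD n (.const 0))

end STy

/-! Process expressions. -/

inductive Proc : Type
  | fwd : ℕ → ℕ → Proc                          -- x ← y
  | spawn : ℕ → ℕ → List AExp → List ℕ → Proc → Proc  -- x ← f[ē] ← ȳ ; Q
  | sendLab : ℕ → ℕ → Proc → Proc               -- x.k ; P
  | caseP : ℕ → Finset ℕ → (ℕ → Proc) → Proc    -- case x (ℓ ⇒ P_ℓ)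
  | sendCh : ℕ → ℕ → Proc → Proc                -- send x w ; P
  | recvCh : ℕ → ℕ → Proc → Proc                -- y ← recv x ; P
  | closeP : ℕ → Proc                           -- close x
  | waitP : ℕ → Proc → Proc
  | sendIdx : ℕ → AExp → Proc → Proc            -- send x {e} ; P
  | recvIdx : ℕ → Proc → Proc                   -- {n} ← recv x ; P  (binds n)
  | assertP : ℕ → AProp → Proc → Proc           -- assert x {φ} ; P
  | assumeP : ℕ → AProp → Proc → Proc           -- assume x {φ} ; P
  | payP : ℕ → AExp → Proc → Proc               -- pay x {r} ; P
  | getP : ℕ → AExp → Proc → Proc               -- get x {r} ; P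
  | workP : AExp → Proc → Proc                  -- work {r} ; P
  | imposs : Proc                               -- impossible

namespace Proc

/-- Renaming of channel names. -/
def rename (g : ℕ → ℕ) : Proc → Proc
  | fwd x y => fwd (g x) (g y)
  | spawn x f es ys Q => spawn (g x) f es (ys.map g) (Q.rename g)
  | sendLab x k P => sendLab (g x) k (P.rename g)
  | caseP x L br => caseP (g x) L (fun ℓ => (br ℓ).rename g)
  | sendCh x w P => sendCh (g x) (g w) (P.rename g)
  | recvCh x y P => recvCh (g x) (g y) (P.rename g)
  | closeP x => closeP (g x)
  | waitP x P => waitP (g x) (P.rename g)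
  | sendIdx x e P => sendIdx (g x) e (P.rename g)
  | recvIdx x P => recvIdx (g x) (P.rename g)
  | assertP x φ P => assertP (g x) φ (P.rename g)
  | assumeP x φ P => assumeP (g x) φ (P.rename g)
  | payP x r P => payP (g x) r (P.rename g)
  | getP x r P => getP (g x) r (P.rename g)
  | workP r P => workP r (P.rename g)
  | imposs => imposs

/-- Substitution of index expressions for index variables. -/
def isubst (τ : ℕ → AExp) : Proc → Proc
  | fwd x y => fwd x y
  | spawn x f es ys Q => spawn x f (es.map (AExp.subst τ)) ys (Q.isubst τ)
  | sendLab x k P => sendLab x k (P.isubst τ)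
  | caseP x L br => caseP x L (fun ℓ => (br ℓ).isubst τ)
  | sendCh x w P => sendCh x w (P.isubst τ)
  | recvCh x y P => recvCh x y (P.isubst τ)
  | closeP x => closeP x
  | waitP x P => waitP x (P.isubst τ)
  | sendIdx x e P => sendIdx x (e.subst τ) (P.isubst τ)
  | recvIdx x P => recvIdx x (P.isubst (liftτ τ))
  | assertP x φ P => assertP x (φ.subst τ) (P.isubst τ)
  | assumeP x φ P => assumeP x (φ.subst τ) (P.isubst τ)
  | payP x r P => payP x (r.subst τ) (P.isubst τ)
  | getP x r P => getP x (r.subst τ) (P.isubst τ)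
  | workP r P => workP (r.subst τ) (P.isubst τ)
  | imposs => imposs

/-- Substituting an index expression for the index variable bound by a
receive. -/
def isubst0 (e : AExp) (P : Proc) : Proc := P.isubst (scons e AExp.var)

end Proc

/-- Renaming one channel. -/
def rn (c c' : ℕ) (P : Proc) : Proc := P.rename (fun a => if a = c then c' else a)

/-- Simultaneous renaming of two channels. -/
def rn2 (c c' x d : ℕ) (P : Proc) : Proc :=
  P.rename (fun a => if a = c then c' else if a = x then d else a)

/-! Contexts and signatures. -/

/-- A linear context of channel typings. -/
abbrev Ctx : Type := Multiset (ℕ × STy)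

/-- Shifting a context when a fresh index variable is added. -/
def Ctx.shift (Δ : Ctx) : Ctx := Δ.map (fun p => (p.1, p.2.shift))

/-- A process definition `Δ ⊢^q f[n̄] = P :: (x : A)` in the signature. -/
structure ProcDef : Type where
  ctx : List (ℕ × STy)
  pot : AExp
  body : Proc
  chan : ℕ
  ty : STy

/-- The process part of a signature. -/
abbrev Defs : Type := List ProcDef


/-! Type definitions. -/

/-- A signature of type definitions: the type name `v` is defined by the
`v`-th entry (whose free index variables are its parameters `n̄`). -/
abbrev Sig : Type := List STy

/-- Unfolding of a type: a type name is replaced by its instantiated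
definition; all other types are returned unchanged. -/
def unfoldT (Sg : Sig) : STy → STy
  | .tname v es => (Sg.getD v .one).instIdx es
  | A => A

/-! The explicit typing judgment `V ; C ; Δ ⊢^q_Σ P :: (x : A)`.
Index variables are de Bruijn indices, so the variable context `V` is
implicit; `C` is the arithmetic constraint, `Δ` the linear context, `q` the
potential and `pd` the (fixed) signature of process definitions. -/

inductive Ty (Sg : Sig) (pd : Defs) : AProp → Ctx → AExp → Proc → ℕ → STy → Prop
  /-- identity: `q = 0` and equal types. -/
  | id {C A q x y} :
      EntailsEq C q (.const 0) →
      Ty Sg pd C {(y, A)} q (.fwd x y) x A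
  /-- spawn of a defined process, instantiating its definition and splitting
  the potential. -/
  | spawn {C Δ₂ r x z Cz Q f es ys} {D : ProcDef} :
      pd[f]? = some D →
      ys.length = D.ctx.length →
      EntailsGe C r (D.pot.subst (fun n => es.getD n (.const 0))) →
      Ty Sg pd C ((x, D.ty.instIdx es) ::ₘ Δ₂)
        (r.sub (D.pot.subst (fun n => es.getD n (.const 0)))) Q z Cz →
      Ty Sg pd C
        ((↑(ys.zip (D.ctx.map (fun p => p.2.instIdx es))) : Ctx) + Δ₂)
        r (.spawn x f es ys Q) z Cz
  /-- ⊕R -/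
  | ichoiceR {C Δ q x k L f P} :
      k ∈ L →
      Ty Sg pd C Δ q P x (f k) →
      Ty Sg pd C Δ q (.sendLab x k P) x (.ichoice L f)
  /-- ⊕L -/
  | ichoiceL {C Δ q x z Cz L f br} :
      (∀ ℓ ∈ L, Ty Sg pd C ((x, f ℓ) ::ₘ Δ) q (br ℓ) z Cz) →
      Ty Sg pd C ((x, .ichoice L f) ::ₘ Δ) q (.caseP x L br) z Cz
  /-- &R -/
  | echoiceR {C Δ q x L f br} :
      (∀ ℓ ∈ L, Ty Sg pd C Δ q (br ℓ) x (f ℓ)) →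
      Ty Sg pd C Δ q (.caseP x L br) x (.echoice L f)
  /-- &L -/
  | echoiceL {C Δ q x z Cz k L f Q} :
      k ∈ L →
      Ty Sg pd C ((x, f k) ::ₘ Δ) q Q z Cz →
      Ty Sg pd C ((x, .echoice L f) ::ₘ Δ) q (.sendLab x k Q) z Cz
  /-- ⊗R -/
  | tensorR {C Δ q x w A B P} :
      Ty Sg pd C Δ q P x B →
      Ty Sg pd C ((w, A) ::ₘ Δ) q (.sendCh x w P) x (.tensor A B)
  /-- ⊗L -/
  | tensorL {C Δ q x y z Cz A B Q} :
      Ty Sg pd C ((y, A) ::ₘ (x, B) ::ₘ Δ) q Q z Cz →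
      Ty Sg pd C ((x, .tensor A B) ::ₘ Δ) q (.recvCh x y Q) z Cz
  /-- ⊸R -/
  | lolliR {C Δ q x y A B P} :
      Ty Sg pd C ((y, A) ::ₘ Δ) q P x B →
      Ty Sg pd C Δ q (.recvCh x y P) x (.lolli A B)
  /-- ⊸L -/
  | lolliL {C Δ q x w z Cz A B Q} :
      Ty Sg pd C ((x, B) ::ₘ Δ) q Q z Cz →
      Ty Sg pd C ((w, A) ::ₘ (x, .lolli A B) ::ₘ Δ) q (.sendCh x w Q) z Cz
  /-- 1R: `q = 0`. -/
  | oneR {C q x} :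
      EntailsEq C q (.const 0) →
      Ty Sg pd C 0 q (.closeP x) x .one
  /-- 1L -/
  | oneL {C Δ q x z Cz Q} :
      Ty Sg pd C Δ q Q z Cz →
      Ty Sg pd C ((x, .one) ::ₘ Δ) q (.waitP x Q) z Cz
  /-- ∃R: send the witness `e`. -/
  | existsR {C Δ q x e A P} :
      Ty Sg pd C Δ q P x (A.subst0 e) →
      Ty Sg pd C Δ q (.sendIdx x e P) x (.sexists A)
  /-- ∃L: receive a fresh index variable. -/
  | existsL {C Δ q x z Cz A Q} :
      Ty Sg pd C.shift ((x, A) ::ₘ Ctx.shift Δ) q.shift Q z Cz.shift →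
      Ty Sg pd C ((x, .sexists A) ::ₘ Δ) q (.recvIdx x Q) z Cz
  /-- ∀R: receive a fresh index variable. -/
  | forallR {C Δ q x A P} :
      Ty Sg pd C.shift (Ctx.shift Δ) q.shift P x A →
      Ty Sg pd C Δ q (.recvIdx x P) x (.sforall A)
  /-- ∀L: send the witness `e`. -/
  | forallL {C Δ q x z Cz e A Q} :
      Ty Sg pd C ((x, A.subst0 e) ::ₘ Δ) q Q z Cz →
      Ty Sg pd C ((x, .sforall A) ::ₘ Δ) q (.sendIdx x e Q) z Cz
  /-- ?R: the provider must prove `C ⊨ φ`. -/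
  | assertR {C Δ q x φ A P} :
      Entails C φ →
      Ty Sg pd C Δ q P x A →
      Ty Sg pd C Δ q (.assertP x φ P) x (.sassert φ A)
  /-- ?L: the client adds `φ` to `C`. -/
  | assertL {C Δ q x z Cz φ A Q} :
      Ty Sg pd (C.conj φ) ((x, A) ::ₘ Δ) q Q z Cz →
      Ty Sg pd C ((x, .sassert φ A) ::ₘ Δ) q (.assumeP x φ Q) z Cz
  /-- !R: the provider adds `φ` to `C`. -/
  | assumeR {C Δ q x φ A P} :
      Ty Sg pd (C.conj φ) Δ q P x A →
      Ty Sg pd C Δ q (.assumeP x φ P) x (.sassume φ A)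
  /-- !L: the client must prove `C ⊨ φ`. -/
  | assumeL {C Δ q x z Cz φ A Q} :
      Entails C φ →
      Ty Sg pd C ((x, A) ::ₘ Δ) q Q z Cz →
      Ty Sg pd C ((x, .sassume φ A) ::ₘ Δ) q (.assertP x φ Q) z Cz
  /-- ▷R: pay potential `r` (requires `q ≥ r`). -/
  | payR {C Δ q x r A P} :
      EntailsGe C q r →
      Ty Sg pd C Δ (q.sub r) P x A →
      Ty Sg pd C Δ q (.payP x r P) x (.tpay r A)
  /-- ▷L: receive potential `r`. -/
  | payL {C Δ q x z Cz r A Q} :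
      Ty Sg pd C ((x, A) ::ₘ Δ) (q.add r) Q z Cz →
      Ty Sg pd C ((x, .tpay r A) ::ₘ Δ) q (.getP x r Q) z Cz
  /-- ◁R: receive potential `r`. -/
  | getR {C Δ q x r A P} :
      Ty Sg pd C Δ (q.add r) P x A →
      Ty Sg pd C Δ q (.getP x r P) x (.tget r A)
  /-- ◁L: pay potential `r` (requires `q ≥ r`). -/
  | getL {C Δ q x z Cz r A Q} :
      EntailsGe C q r →
      Ty Sg pd C ((x, A) ::ₘ Δ) (q.sub r) Q z Cz →
      Ty Sg pd C ((x, .tget r A) ::ₘ Δ) q (.payP x r Q) z Cz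
  /-- work: requires `C ⊨ q ≥ r`, continue with `q − r`. -/
  | work {C Δ q x r A P} :
      EntailsGe C q r →
      Ty Sg pd C Δ (q.sub r) P x A →
      Ty Sg pd C Δ q (.workP r P) x A
  /-- unsat: `impossible` is well-typed whenever `C ⊨ ⊥`. -/
  | unsat {C Δ q x A} :
      Unsat C →
      Ty Sg pd C Δ q .imposs x A
  /-- equirecursive unfolding of a type definition on the right. -/
  | defR {C Δ q P x v es} :
      Ty Sg pd C Δ q P x (unfoldT Sg (.tname v es)) →
      Ty Sg pd C Δ q P x (.tname v es)
  /-- equirecursive unfolding of a type definition on the left. -/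
  | defL {C Δ q P z Cz x v es} :
      Ty Sg pd C ((x, unfoldT Sg (.tname v es)) ::ₘ Δ) q P z Cz →
      Ty Sg pd C ((x, .tname v es) ::ₘ Δ) q P z Cz

/-! Polarized types: `A⁺ ::= S | ?{φ}. A⁺ | ▷^r A⁺` and
`A⁻ ::= S | !{φ}. A⁻ | ◁^r A⁻`, where `S` ranges over structural types. -/

mutual
  inductive PosTy : STy → Prop
    | struct {A} : StructTy A → PosTy A
    | sassert {φ A} : PosTy A → PosTy (.sassert φ A)
    | tpay {r A} : PosTy A → PosTy (.tpay r A)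

  inductive NegTy : STy → Prop
    | struct {A} : StructTy A → NegTy A
    | sassume {φ A} : NegTy A → NegTy (.sassume φ A)
    | tget {r A} : NegTy A → NegTy (.tget r A)

  inductive PolTy : STy → Prop
    | pos {A} : PosTy A → PolTy A
    | neg {A} : NegTy A → PolTy A

  inductive StructTy : STy → Prop
    | ichoice {L f} : (∀ ℓ ∈ L, PolTy (f ℓ)) → StructTy (.ichoice L f)
    | echoice {L f} : (∀ ℓ ∈ L, PolTy (f ℓ)) → StructTy (.echoice L f)
    | tensor {A B} : PolTy A → PolTy B → StructTy (.tensor A B)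
    | lolli {A B} : PolTy A → PolTy B → StructTy (.lolli A B)
    | one : StructTy .one
    | tname {v es} : StructTy (.tname v es)
    | sexists {A} : PolTy A → StructTy (.sexists A)
    | sforall {A} : PolTy A → StructTy (.sforall A)
end

/-- All type definitions of the signature are polarized (so that polarity can
be determined after unfolding of definitions). -/
def PolarSig (Sg : Sig) : Prop := ∀ B ∈ Sg, PolTy B

/-! The implicit typing judgment `V ; C ; Δ ⊩^q P :: (x : A)`: as the explicit
system, except that the rules for `?{φ}`, `!{φ}`, `▷^r` and `◁^r` leave the
process expression unchanged. -/

inductive ITy (Sg : Sig) (pd : Defs) : AProp → Ctx → AExp → Proc → ℕ → STy → Prop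
  | id {C A q x y} :
      EntailsEq C q (.const 0) →
      ITy Sg pd C {(y, A)} q (.fwd x y) x A
  | spawn {C Δ₂ r x z Cz Q f es ys} {D : ProcDef} :
      pd[f]? = some D →
      ys.length = D.ctx.length →
      EntailsGe C r (D.pot.subst (fun n => es.getD n (.const 0))) →
      ITy Sg pd C ((x, D.ty.instIdx es) ::ₘ Δ₂)
        (r.sub (D.pot.subst (fun n => es.getD n (.const 0)))) Q z Cz →
      ITy Sg pd C
        ((↑(ys.zip (D.ctx.map (fun p => p.2.instIdx es))) : Ctx) + Δ₂)
        r (.spawn x f es ys Q) z Cz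
  | ichoiceR {C Δ q x k L f P} :
      k ∈ L →
      ITy Sg pd C Δ q P x (f k) →
      ITy Sg pd C Δ q (.sendLab x k P) x (.ichoice L f)
  | ichoiceL {C Δ q x z Cz L f br} :
      (∀ ℓ ∈ L, ITy Sg pd C ((x, f ℓ) ::ₘ Δ) q (br ℓ) z Cz) →
      ITy Sg pd C ((x, .ichoice L f) ::ₘ Δ) q (.caseP x L br) z Cz
  | echoiceR {C Δ q x L f br} :
      (∀ ℓ ∈ L, ITy Sg pd C Δ q (br ℓ) x (f ℓ)) →
      ITy Sg pd C Δ q (.caseP x L br) x (.echoice L f)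
  | echoiceL {C Δ q x z Cz k L f Q} :
      k ∈ L →
      ITy Sg pd C ((x, f k) ::ₘ Δ) q Q z Cz →
      ITy Sg pd C ((x, .echoice L f) ::ₘ Δ) q (.sendLab x k Q) z Cz
  | tensorR {C Δ q x w A B P} :
      ITy Sg pd C Δ q P x B →
      ITy Sg pd C ((w, A) ::ₘ Δ) q (.sendCh x w P) x (.tensor A B)
  | tensorL {C Δ q x y z Cz A B Q} :
      ITy Sg pd C ((y, A) ::ₘ (x, B) ::ₘ Δ) q Q z Cz →
      ITy Sg pd C ((x, .tensor A B) ::ₘ Δ) q (.recvCh x y Q) z Cz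
  | lolliR {C Δ q x y A B P} :
      ITy Sg pd C ((y, A) ::ₘ Δ) q P x B →
      ITy Sg pd C Δ q (.recvCh x y P) x (.lolli A B)
  | lolliL {C Δ q x w z Cz A B Q} :
      ITy Sg pd C ((x, B) ::ₘ Δ) q Q z Cz →
      ITy Sg pd C ((w, A) ::ₘ (x, .lolli A B) ::ₘ Δ) q (.sendCh x w Q) z Cz
  | oneR {C q x} :
      EntailsEq C q (.const 0) →
      ITy Sg pd C 0 q (.closeP x) x .one
  | oneL {C Δ q x z Cz Q} :
      ITy Sg pd C Δ q Q z Cz →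
      ITy Sg pd C ((x, .one) ::ₘ Δ) q (.waitP x Q) z Cz
  | existsR {C Δ q x e A P} :
      ITy Sg pd C Δ q P x (A.subst0 e) →
      ITy Sg pd C Δ q (.sendIdx x e P) x (.sexists A)
  | existsL {C Δ q x z Cz A Q} :
      ITy Sg pd C.shift ((x, A) ::ₘ Ctx.shift Δ) q.shift Q z Cz.shift →
      ITy Sg pd C ((x, .sexists A) ::ₘ Δ) q (.recvIdx x Q) z Cz
  | forallR {C Δ q x A P} :
      ITy Sg pd C.shift (Ctx.shift Δ) q.shift P x A →
      ITy Sg pd C Δ q (.recvIdx x P) x (.sforall A)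
  | forallL {C Δ q x z Cz e A Q} :
      ITy Sg pd C ((x, A.subst0 e) ::ₘ Δ) q Q z Cz →
      ITy Sg pd C ((x, .sforall A) ::ₘ Δ) q (.sendIdx x e Q) z Cz
  /-- implicit ?R: the process expression is unchanged. -/
  | assertR {C Δ q x φ A P} :
      Entails C φ →
      ITy Sg pd C Δ q P x A →
      ITy Sg pd C Δ q P x (.sassert φ A)
  /-- implicit ?L. -/
  | assertL {C Δ q x z Cz φ A Q} :
      ITy Sg pd (C.conj φ) ((x, A) ::ₘ Δ) q Q z Cz →
      ITy Sg pd C ((x, .sassert φ A) ::ₘ Δ) q Q z Cz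
  /-- implicit !R. -/
  | assumeR {C Δ q x φ A P} :
      ITy Sg pd (C.conj φ) Δ q P x A →
      ITy Sg pd C Δ q P x (.sassume φ A)
  /-- implicit !L. -/
  | assumeL {C Δ q x z Cz φ A Q} :
      Entails C φ →
      ITy Sg pd C ((x, A) ::ₘ Δ) q Q z Cz →
      ITy Sg pd C ((x, .sassume φ A) ::ₘ Δ) q Q z Cz
  /-- implicit ▷R: requires `C ⊨ q ≥ r`, continue with `q − r`. -/
  | payR {C Δ q x r A P} :
      EntailsGe C q r →
      ITy Sg pd C Δ (q.sub r) P x A →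
      ITy Sg pd C Δ q P x (.tpay r A)
  /-- implicit ▷L: add `r` to the potential. -/
  | payL {C Δ q x z Cz r A Q} :
      ITy Sg pd C ((x, A) ::ₘ Δ) (q.add r) Q z Cz →
      ITy Sg pd C ((x, .tpay r A) ::ₘ Δ) q Q z Cz
  /-- implicit ◁R: add `r` to the potential. -/
  | getR {C Δ q x r A P} :
      ITy Sg pd C Δ (q.add r) P x A →
      ITy Sg pd C Δ q P x (.tget r A)
  /-- implicit ◁L: requires `C ⊨ q ≥ r`. -/
  | getL {C Δ q x z Cz r A Q} :
      EntailsGe C q r →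
      ITy Sg pd C ((x, A) ::ₘ Δ) (q.sub r) Q z Cz →
      ITy Sg pd C ((x, .tget r A) ::ₘ Δ) q Q z Cz
  | work {C Δ q x r A P} :
      EntailsGe C q r →
      ITy Sg pd C Δ (q.sub r) P x A →
      ITy Sg pd C Δ q (.workP r P) x A
  | unsat {C Δ q x A} :
      Unsat C →
      ITy Sg pd C Δ q .imposs x A
  | defR {C Δ q P x v es} :
      ITy Sg pd C Δ q P x (unfoldT Sg (.tname v es)) →
      ITy Sg pd C Δ q P x (.tname v es)
  | defL {C Δ q P z Cz x v es} :
      ITy Sg pd C ((x, unfoldT Sg (.tname v es)) ::ₘ Δ) q P z Cz →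
      ITy Sg pd C ((x, .tname v es) ::ₘ Δ) q P z Cz

/-! The forcing calculus `V ; C ; Δ⁻ ; Ω ⊢^q P :: (x : A)`.  The context is
split into a stable context `Δ⁻` of negative types and an ordered context
`Ω`; square brackets in the paper correspond to the focused judgments `FR`
(succedent focused) and `FL` (a focused antecedent). -/

/-- Shifting an ordered context when a fresh index variable is added. -/
def Ord.shift (Ω : List (ℕ × STy)) : List (ℕ × STy) :=
  Ω.map (fun p => (p.1, p.2.shift))

mutual
  /-- The inversion / stable phase of the forcing calculus. -/
  inductive FC (Sg : Sig) (pd : Defs) :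
      AProp → Ctx → List (ℕ × STy) → AExp → Proc → ℕ → STy → Prop
    /-- invertible !R: assume `φ` eagerly. -/
    | assumeR {C Δ Ω q P x φ A} :
        FC Sg pd (C.conj φ) Δ Ω q P x A →
        FC Sg pd C Δ Ω q P x (.sassume φ A)
    /-- invertible ◁R: receive the potential eagerly. -/
    | getR {C Δ Ω q P x r A} :
        FC Sg pd C Δ Ω (q.add r) P x A →
        FC Sg pd C Δ Ω q P x (.tget r A)
    /-- invertible ?L on the ordered context. -/
    | assertL {C Δ Ω q P z Cz y φ A} :
        FC Sg pd (C.conj φ) Δ (Ω ++ [(y, A)]) q P z Cz →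
        FC Sg pd C Δ (Ω ++ [(y, .sassert φ A)]) q P z Cz
    /-- invertible ▷L on the ordered context. -/
    | payL {C Δ Ω q P z Cz y r A} :
        FC Sg pd C Δ (Ω ++ [(y, A)]) (q.add r) P z Cz →
        FC Sg pd C Δ (Ω ++ [(y, .tpay r A)]) q P z Cz
    /-- move a stable (negative) antecedent into `Δ⁻` (succedent positive). -/
    | move {C Δ Ω q P z Cz y A} :
        PosTy Cz → NegTy A →
        FC Sg pd C ((y, A) ::ₘ Δ) Ω q P z Cz →
        FC Sg pd C Δ (Ω ++ [(y, A)]) q P z Cz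
    /-- equirecursive unfolding of a type definition on the right. -/
    | defR {C Δ Ω q P x v es} :
        FC Sg pd C Δ Ω q P x (unfoldT Sg (.tname v es)) →
        FC Sg pd C Δ Ω q P x (.tname v es)
    /-- equirecursive unfolding of a type definition in the ordered context. -/
    | defL {C Δ Ω q P z Cz y v es} :
        FC Sg pd C Δ (Ω ++ [(y, unfoldT Sg (.tname v es))]) q P z Cz →
        FC Sg pd C Δ (Ω ++ [(y, .tname v es)]) q P z Cz
    /-- focus on the succedent (about to communicate along it). -/
    | focusR {C Δ q P z Cz} :
        PosTy Cz →
        FR Sg pd C Δ q P z Cz →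
        FC Sg pd C Δ [] q P z Cz
    /-- focus on a stable antecedent (about to communicate along it). -/
    | focusL {C Δ q P z Cz y A} :
        PosTy Cz → NegTy A →
        FL Sg pd C Δ (y, A) q P z Cz →
        FC Sg pd C ((y, A) ::ₘ Δ) [] q P z Cz
    /-- identity. -/
    | id {C A q x y} :
        EntailsEq C q (.const 0) →
        FC Sg pd C {(y, A)} [] q (.fwd x y) x A
    /-- spawn of a defined process. -/
    | spawn {C Δ₂ r x z Cz Q f es ys} {D : ProcDef} :
        pd[f]? = some D →
        ys.length = D.ctx.length →
        EntailsGe C r (D.pot.subst (fun n => es.getD n (.const 0))) →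
        FC Sg pd C Δ₂ [(x, D.ty.instIdx es)]
          (r.sub (D.pot.subst (fun n => es.getD n (.const 0)))) Q z Cz →
        FC Sg pd C
          ((↑(ys.zip (D.ctx.map (fun p => p.2.instIdx es))) : Ctx) + Δ₂)
          [] r (.spawn x f es ys Q) z Cz
    /-- work. -/
    | work {C Δ q x r A P} :
        EntailsGe C q r →
        FC Sg pd C Δ [] (q.sub r) P x A →
        FC Sg pd C Δ [] q (.workP r P) x A
    /-- unsat. -/
    | unsat {C Δ Ω q x A} :
        Unsat C →
        FC Sg pd C Δ Ω q .imposs x A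

  /-- Right-focused judgment `Δ⁻ ; · ⊢^q P :: [x : A⁺]`. -/
  inductive FR (Sg : Sig) (pd : Defs) :
      AProp → Ctx → AExp → Proc → ℕ → STy → Prop
    /-- lazy ?R on a focused succedent. -/
    | assertR {C Δ q P x φ A} :
        Entails C φ →
        FR Sg pd C Δ q P x A →
        FR Sg pd C Δ q P x (.sassert φ A)
    /-- lazy ▷R on a focused succedent. -/
    | payR {C Δ q P x r A} :
        EntailsGe C q r →
        FR Sg pd C Δ (q.sub r) P x A →
        FR Sg pd C Δ q P x (.tpay r A)
    /-- ⊕R: lose the focus and restart inversion. -/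
    | ichoiceR {C Δ q x k L f P} :
        k ∈ L →
        FC Sg pd C Δ [] q P x (f k) →
        FR Sg pd C Δ q (.sendLab x k P) x (.ichoice L f)
    /-- &R. -/
    | echoiceR {C Δ q x L f br} :
        (∀ ℓ ∈ L, FC Sg pd C Δ [] q (br ℓ) x (f ℓ)) →
        FR Sg pd C Δ q (.caseP x L br) x (.echoice L f)
    /-- ⊗R. -/
    | tensorR {C Δ q x w A B P} :
        StructTy A →
        FC Sg pd C Δ [] q P x B →
        FR Sg pd C ((w, A) ::ₘ Δ) q (.sendCh x w P) x (.tensor A B)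
    /-- ⊸R. -/
    | lolliR {C Δ q x y A B P} :
        StructTy A →
        FC Sg pd C Δ [(y, A)] q P x B →
        FR Sg pd C Δ q (.recvCh x y P) x (.lolli A B)
    /-- 1R. -/
    | oneR {C q x} :
        EntailsEq C q (.const 0) →
        FR Sg pd C 0 q (.closeP x) x .one
    /-- ∃R. -/
    | existsR {C Δ q x e A P} :
        FC Sg pd C Δ [] q P x (A.subst0 e) →
        FR Sg pd C Δ q (.sendIdx x e P) x (.sexists A)
    /-- ∀R. -/
    | forallR {C Δ q x A P} :
        FC Sg pd C.shift (Ctx.shift Δ) [] q.shift P x A →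
        FR Sg pd C Δ q (.recvIdx x P) x (.sforall A)

  /-- Left-focused judgment `Δ⁻, [y : A⁻] ; · ⊢^q P :: (z : C⁺)`. -/
  inductive FL (Sg : Sig) (pd : Defs) :
      AProp → Ctx → ℕ × STy → AExp → Proc → ℕ → STy → Prop
    /-- lazy !L on a focused antecedent. -/
    | assumeL {C Δ q Q z Cz y φ A} :
        Entails C φ →
        FL Sg pd C Δ (y, A) q Q z Cz →
        FL Sg pd C Δ (y, .sassume φ A) q Q z Cz
    /-- lazy ◁L on a focused antecedent. -/
    | getL {C Δ q Q z Cz y r A} :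
        EntailsGe C q r →
        FL Sg pd C Δ (y, A) (q.sub r) Q z Cz →
        FL Sg pd C Δ (y, .tget r A) q Q z Cz
    /-- ⊕L: lose the focus and restart inversion. -/
    | ichoiceL {C Δ q z Cz y L f br} :
        (∀ ℓ ∈ L, FC Sg pd C Δ [(y, f ℓ)] q (br ℓ) z Cz) →
        FL Sg pd C Δ (y, .ichoice L f) q (.caseP y L br) z Cz
    /-- &L. -/
    | echoiceL {C Δ q z Cz y k L f Q} :
        k ∈ L →
        FC Sg pd C Δ [(y, f k)] q Q z Cz →
        FL Sg pd C Δ (y, .echoice L f) q (.sendLab y k Q) z Cz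
    /-- ⊗L. -/
    | tensorL {C Δ q z Cz y w A B Q} :
        StructTy A →
        FC Sg pd C Δ [(y, B), (w, A)] q Q z Cz →
        FL Sg pd C Δ (y, .tensor A B) q (.recvCh y w Q) z Cz
    /-- ⊸L. -/
    | lolliL {C Δ q z Cz y w A B Q} :
        StructTy A →
        FC Sg pd C Δ [(y, B)] q Q z Cz →
        FL Sg pd C ((w, A) ::ₘ Δ) (y, .lolli A B) q (.sendCh y w Q) z Cz
    /-- 1L. -/
    | oneL {C Δ q z Cz y Q} :
        FC Sg pd C Δ [] q Q z Cz →
        FL Sg pd C Δ (y, .one) q (.waitP y Q) z Cz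
    /-- ∃L. -/
    | existsL {C Δ q z Cz y A Q} :
        FC Sg pd C.shift (Ctx.shift Δ) [(y, A)] q.shift Q z Cz.shift →
        FL Sg pd C Δ (y, .sexists A) q (.recvIdx y Q) z Cz
    /-- ∀L. -/
    | forallL {C Δ q z Cz y e A Q} :
        FC Sg pd C Δ [(y, A.subst0 e)] q Q z Cz →
        FL Sg pd C Δ (y, .sforall A) q (.sendIdx y e Q) z Cz
end

/-! Every rule of the forcing calculus is an instance of the corresponding rule
of the implicit system (or, for focusing and for moving a channel into `Δ⁻`, of
no rule at all) once the stable and the ordered context are merged into the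
single multiset `Δ⁻ + Ω`. -/

section MultisetCoe

variable {α : Type*} (s : Multiset α) (l : List α) (a b : α)

theorem Multiset.add_coe_nil : s + ↑([] : List α) = s := by
  rw [Multiset.coe_nil, add_zero]

theorem Multiset.add_coe_singleton : s + ↑[a] = a ::ₘ s := by
  rw [Multiset.coe_singleton, add_comm, Multiset.singleton_add]

theorem Multiset.add_coe_pair : s + ↑[a, b] = b ::ₘ a ::ₘ s := by
  rw [← Multiset.cons_coe, Multiset.add_cons, Multiset.add_coe_singleton,
    Multiset.cons_swap]

theorem Multiset.add_coe_concat : s + ↑(l ++ [a]) = a ::ₘ (s + ↑l) := by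
  rw [← Multiset.coe_add, ← add_assoc, Multiset.add_coe_singleton]

end MultisetCoe

section Soundness

open Multiset (add_coe_nil add_coe_singleton add_coe_pair add_coe_concat cons_add cons_swap)

variable {Sg : Sig} {pd : Defs}

mutual

theorem FC.toITy {C Δ Ω q P x A} :
    FC Sg pd C Δ Ω q P x A → ITy Sg pd C (Δ + ↑Ω) q P x A
  | .assumeR h => .assumeR h.toITy
  | .getR h => .getR h.toITy
  | .assertL h => add_coe_concat .. ▸ .assertL (add_coe_concat .. ▸ h.toITy)
  | .payL h => add_coe_concat .. ▸ .payL (add_coe_concat .. ▸ h.toITy)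
  | .move _ _ h => add_coe_concat .. ▸ cons_add .. ▸ h.toITy
  | .defR h => .defR h.toITy
  | .defL h => add_coe_concat .. ▸ .defL (add_coe_concat .. ▸ h.toITy)
  | .focusR _ h => add_coe_nil _ ▸ h.toITy
  | .focusL _ _ h => add_coe_nil _ ▸ h.toITy
  | .id hq => add_coe_nil _ ▸ .id hq
  | .spawn hf hlen hr h => add_coe_nil _ ▸ .spawn hf hlen hr (add_coe_singleton .. ▸ h.toITy)
  | .work hr h => add_coe_nil _ ▸ .work hr (by simpa only [add_coe_nil] using h.toITy)
  | .unsat hC => .unsat hC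

theorem FR.toITy {C Δ q P x A} :
    FR Sg pd C Δ q P x A → ITy Sg pd C Δ q P x A
  | .assertR hφ h => .assertR hφ h.toITy
  | .payR hr h => .payR hr h.toITy
  | .ichoiceR hk h => .ichoiceR hk (by simpa only [add_coe_nil] using h.toITy)
  | .echoiceR h => .echoiceR fun ℓ hℓ => by simpa only [add_coe_nil] using (h ℓ hℓ).toITy
  | .tensorR _ h => .tensorR (by simpa only [add_coe_nil] using h.toITy)
  | .lolliR _ h => .lolliR (add_coe_singleton .. ▸ h.toITy)
  | .oneR hq => .oneR hq
  | .existsR h => .existsR (by simpa only [add_coe_nil] using h.toITy)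
  | .forallR h => .forallR (by simpa only [add_coe_nil] using h.toITy)

theorem FL.toITy {C Δ p q P z Cz} :
    FL Sg pd C Δ p q P z Cz → ITy Sg pd C (p ::ₘ Δ) q P z Cz
  | .assumeL hφ h => .assumeL hφ h.toITy
  | .getL hr h => .getL hr h.toITy
  | .ichoiceL h => .ichoiceL fun ℓ hℓ => add_coe_singleton .. ▸ (h ℓ hℓ).toITy
  | .echoiceL hk h => .echoiceL hk (add_coe_singleton .. ▸ h.toITy)
  | .tensorL _ h => .tensorL (add_coe_pair .. ▸ h.toITy)
  | .lolliL _ h => cons_swap .. ▸ .lolliL (add_coe_singleton .. ▸ h.toITy)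
  | .oneL h => .oneL (by simpa only [add_coe_nil] using h.toITy)
  | .existsL h => .existsL (add_coe_singleton .. ▸ h.toITy)
  | .forallL h => .forallL (add_coe_singleton .. ▸ h.toITy)

end

end Soundness

/-- soundness of the forcing calculus.  For polarized types, if
`V ; C ; · ; Δ ⊢^q P :: (x : A)` is derivable in the forcing calculus, then
`V ; C ; Δ ⊩^q P :: (x : A)` is derivable in the implicit type system. -/
theorem forcing_sound (Sg : Sig) (pd : Defs) (hSg : PolarSig Sg)
    (C : AProp) (Δ : List (ℕ × STy)) (q : AExp) (P : Proc) (x : ℕ) (A : STy)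
    (hA : PolTy A) (hΔ : ∀ p ∈ Δ, PolTy p.2)
    (h : FC Sg pd C 0 Δ q P x A) :
    ITy Sg pd C (↑Δ : Ctx) q P x A :=
  zero_add (↑Δ : Ctx) ▸ h.toITy
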